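/- arXiv:1907.00529 — 12 statements merged into one kernel-verified Lean document; each statement's English description precedes it below -/
import Mathlib

section
/- Let a_1,…,a_k be positive integers with n = a_1 + ⋯ + a_k, and suppose a_1 ≥ a_i for all i ∈ {1,…,k}. Then for any m ∈ {1,…,n−1} there exists a subset S ⊆ {2,…,k} such that ∑_{i∈S} a_i ≤ m and ∑_{i∈{2,…,k}∖S} a_i ≤ n − m − 1. -/
theorem stmt_0 (k : ℕ) (hk : 1 ≤ k) (a : Fin k → ℕ) (ha : ∀ i, 0 < a i)
    (n : ℕ) (hn : n = ∑ i, a i)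
    (hmax : ∀ i, a i ≤ a ⟨0, hk⟩)
    (m : ℕ) (hm1 : 1 ≤ m) (hm2 : m ≤ n - 1) :
    ∃ S : Finset (Fin k), ⟨0, hk⟩ ∉ S ∧
      (∑ i ∈ S, a i) ≤ m ∧
      (∑ i ∈ (Finset.univ.erase ⟨0, hk⟩) \ S, a i) ≤ n - m - 1 := by
  set z : Fin k := ⟨0, hk⟩
  set R : Finset (Fin k) := Finset.univ.erase z with hR
  set P : Finset (Finset (Fin k)) :=
    R.powerset.filter (fun T => ∑ i ∈ T, a i ≤ m) with hP
  have hne : P.Nonempty := ⟨∅, by simp [hP]⟩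
  obtain ⟨S, hSP, hSmax⟩ := P.exists_max_image (fun T => ∑ i ∈ T, a i) hne
  simp only [hP, Finset.mem_filter, Finset.mem_powerset] at hSP
  obtain ⟨hSR, hSm⟩ := hSP
  have hzS : z ∉ S := fun h => (Finset.mem_erase.mp (hSR h)).1 rfl
  refine ⟨S, hzS, hSm, ?_⟩
  have hsplit : ∑ i ∈ R \ S, a i + ∑ i ∈ S, a i = ∑ i ∈ R, a i :=
    Finset.sum_sdiff hSR
  have hRn : ∑ i ∈ R, a i + a z = n := by
    rw [hn, ← Finset.sum_erase_add Finset.univ a (Finset.mem_univ z)]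
  by_cases hcase : R \ S = ∅
  · have : 0 < a z := ha z
    simp only [hcase, Finset.sum_empty]
    omega
  · obtain ⟨j, hj⟩ := Finset.nonempty_of_ne_empty hcase
    have hjR := (Finset.mem_sdiff.mp hj).1
    have hjS := (Finset.mem_sdiff.mp hj).2
    have hins : insert j S ⊆ R := Finset.insert_subset hjR hSR
    have hsum : ∑ i ∈ insert j S, a i = a j + ∑ i ∈ S, a i :=
      Finset.sum_insert hjS
    have hnot : ¬ (∑ i ∈ insert j S, a i ≤ m) := by
      intro hle
      have := hSmax (insert j S) (by
        simp only [hP, Finset.mem_filter, Finset.mem_powerset]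
        exact ⟨hins, hle⟩)
      have := ha j
      omega
    have := hmax j
    omega
end

section
/- For a finite simple graph G with at least one vertex, the chromatic number satisfies χ(G) = 1 + min over all maximal independent sets I of G of χ(G[V ∖ I]), where G[S] denotes the subgraph induced on S. -/
/-- `s` is an independent set of `G`: no two of its vertices are adjacent. -/
def SimpleGraph.IsIndepSet' {V : Type*} (G : SimpleGraph V) (s : Set V) : Prop :=
  ∀ v ∈ s, ∀ w ∈ s, ¬ G.Adj v w

/-- `s` is a maximal independent set of `G`. -/
def SimpleGraph.IsMaxIndepSet {V : Type*} (G : SimpleGraph V) (s : Set V) : Prop :=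
  G.IsIndepSet' s ∧ ∀ t : Set V, G.IsIndepSet' t → s ⊆ t → s = t

/-!
A maximal independent set `I` can serve as one colour class, so `χ(G) ≤ 1 + χ(G[Iᶜ])`.
Conversely, one colour class of an optimal colouring is independent; enlarging it to a maximal
independent set `I` only shrinks the rest, which keeps its `χ(G) - 1` colours, so the minimum is
attained.
-/

namespace SimpleGraph

variable {V : Type*} {G : SimpleGraph V} {s : Set V}

theorem isIndepSet'_iff_isIndepSet : G.IsIndepSet' s ↔ G.IsIndepSet s :=
  ⟨fun h _ hv _ hw _ => h _ hv _ hw,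
    fun h _ hv _ hw hadj => h hv hw (G.ne_of_adj hadj) hadj⟩

theorem isMaxIndepSet_iff_maximal : G.IsMaxIndepSet s ↔ Maximal G.IsIndepSet s := by
  simp only [IsMaxIndepSet, isIndepSet'_iff_isIndepSet, isMaximalIndepSet_iff]
  exact and_congr_right fun _ =>
    forall₂_congr fun _ _ => forall_congr' fun hst => ⟨fun h => h.ge, hst.antisymm⟩

theorem IsIndepSet.exists_maximal_superset (hs : G.IsIndepSet s) :
    ∃ I, s ⊆ I ∧ Maximal G.IsIndepSet I :=
  zorn_subset_nonempty {t | G.IsIndepSet t}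
    (fun c hc hchain _ => ⟨⋃₀ c, hchain.pairwise_sUnion.2 hc, fun _ => Set.subset_sUnion_of_mem⟩)
    s hs

theorem IsIndepSet.colorable_succ {n : ℕ} (hs : G.IsIndepSet s)
    (hcol : (G.induce sᶜ).Colorable n) : G.Colorable (n + 1) := by
  classical
  obtain ⟨c⟩ := hcol
  let d : G.Coloring (Option (Fin n)) :=
    Coloring.mk (fun v => if hv : v ∈ s then none else some (c ⟨v, hv⟩)) fun {v w} hadj => by
      by_cases hv : v ∈ s <;> by_cases hw : w ∈ s <;> simp only [hv, hw, dite_true, dite_false]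
      · exact absurd hadj (hs hv hw (G.ne_of_adj hadj))
      · exact (Option.some_ne_none _).symm
      · exact Option.some_ne_none _
      · exact fun h => c.valid (v := ⟨v, hv⟩) (w := ⟨w, hw⟩) hadj (Option.some_injective _ h)
  simpa using d.colorable

theorem IsIndepSet.chromaticNumber_le (hs : G.IsIndepSet s) :
    G.chromaticNumber ≤ 1 + (G.induce sᶜ).chromaticNumber := by
  rcases eq_top_or_lt_top (G.induce sᶜ).chromaticNumber with htop | hfin
  · simp [htop]
  obtain ⟨n, hn⟩ := ENat.ne_top_iff_exists.1 hfin.ne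
  have hcol : (G.induce sᶜ).Colorable n := chromaticNumber_le_iff_colorable.1 hn.ge
  rw [← hn, add_comm]
  exact_mod_cast (hs.colorable_succ hcol).chromaticNumber_le

theorem Colorable.exists_isIndepSet_induce_compl_colorable {k : ℕ} (h : G.Colorable (k + 1)) :
    ∃ s, G.IsIndepSet s ∧ (G.induce sᶜ).Colorable k := by
  obtain ⟨c⟩ := h
  refine ⟨c.colorClass 0, c.isIndepSet_colorClass 0, ⟨Coloring.mk
    (fun v => (c v.1).pred v.2) fun {v w} hadj h => c.valid hadj ?_⟩⟩
  exact (Fin.pred_inj (ha := v.2) (hb := w.2)).1 h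

theorem Colorable.exists_maximal_isIndepSet_induce_compl_colorable {k : ℕ}
    (h : G.Colorable (k + 1)) : ∃ I, Maximal G.IsIndepSet I ∧ (G.induce Iᶜ).Colorable k := by
  obtain ⟨s, hs, hcol⟩ := h.exists_isIndepSet_induce_compl_colorable
  obtain ⟨I, hsI, hI⟩ := hs.exists_maximal_superset
  exact ⟨I, hI, hcol.of_hom (G.induceHomOfLE (Set.compl_subset_compl.2 hsI)).toHom⟩

end SimpleGraph

open SimpleGraph in
theorem stmt_2_general {V : Type*} [Nonempty V] (G : SimpleGraph V) :
    G.chromaticNumber =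
      1 + ⨅ I : {I : Set V // G.IsMaxIndepSet I}, (G.induce (I.1ᶜ)).chromaticNumber := by
  refine le_antisymm ?_ ?_
  · rw [ENat.add_iInf]
    exact le_iInf fun I => (isMaxIndepSet_iff_maximal.1 I.2).prop.chromaticNumber_le
  · rw [chromaticNumber_eq_biInf]
    refine le_iInf₂ fun m (hm : G.Colorable m) => ?_
    obtain ⟨k, rfl⟩ : ∃ k, m = k + 1 := Nat.exists_eq_succ_of_ne_zero fun h0 =>
      not_isEmpty_of_nonempty V (colorable_zero_iff.1 (h0 ▸ hm))
    obtain ⟨I, hI, hcol⟩ := hm.exists_maximal_isIndepSet_induce_compl_colorable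
    calc 1 + ⨅ J : {I : Set V // G.IsMaxIndepSet I}, (G.induce J.1ᶜ).chromaticNumber
        ≤ 1 + (G.induce Iᶜ).chromaticNumber := by
          gcongr
          exact iInf_le (fun J : {I : Set V // G.IsMaxIndepSet I} =>
            (G.induce J.1ᶜ).chromaticNumber) ⟨I, isMaxIndepSet_iff_maximal.2 hI⟩
      _ ≤ 1 + k := by gcongr; exact hcol.chromaticNumber_le
      _ = ((k + 1 : ℕ) : ℕ∞) := by push_cast; rw [add_comm]

theorem stmt_2 {V : Type*} [Fintype V] [Nonempty V] (G : SimpleGraph V) :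
    G.chromaticNumber =
      1 + ⨅ I : {I : Set V // G.IsMaxIndepSet I}, (G.induce (I.1ᶜ)).chromaticNumber :=
  stmt_2_general G
end

section
/- Let G be a finite simple graph on n vertices and k, k' positive integers with k' < k. Then G is k-colorable if and only if there exists a subset S of the vertices with |S| ≥ ⌈n·k'/k⌉ such that G[S] is k'-colorable and G[V∖S] is (k−k')-colorable. -/
theorem stmt_4 {V : Type*} [Fintype V] (G : SimpleGraph V) (n : ℕ) (hn : n = Fintype.card V)
    (k k' : ℕ) (hk' : 0 < k') (hkk : k' < k) :
    G.Colorable k ↔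
      ∃ S : Set V, (n * k' + k - 1) / k ≤ S.ncard ∧
        (G.induce S).Colorable k' ∧ (G.induce Sᶜ).Colorable (k - k') := by
  classical
  have hk : 0 < k := hk'.trans hkk
  constructor
  · rintro ⟨C⟩
    set f : V → Fin k := fun v => C v
    set a : Fin k → ℕ := fun c => (Finset.univ.filter fun v => f v = c).card with ha
    have hsum : ∑ c, a c = Fintype.card V := by
      rw [← Finset.card_univ]
      exact (Finset.card_eq_sum_card_fiberwise (fun v _ => Finset.mem_univ (f v))).symm
    -- pick T maximizing sum of a over subsets of card k'
    have hne : ((Finset.univ : Finset (Fin k)).powersetCard k').Nonempty := by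
      rw [Finset.powersetCard_nonempty]
      simpa using hkk.le
    obtain ⟨T, hT, hmax⟩ := Finset.exists_max_image _ (fun T => ∑ c ∈ T, a c) hne
    rw [Finset.mem_powersetCard] at hT
    obtain ⟨-, hTcard⟩ := hT
    -- swap lemma
    have hswap : ∀ c ∈ T, ∀ d ∉ T, a d ≤ a c := by
      intro c hc d hd
      have hdT : d ∉ T.erase c := fun h => hd (Finset.mem_of_mem_erase h)
      have hcard : (insert d (T.erase c)).card = k' := by
        rw [Finset.card_insert_of_notMem hdT, Finset.card_erase_of_mem hc, hTcard]
        omega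
      have hle := hmax (insert d (T.erase c))
        (Finset.mem_powersetCard.2 ⟨Finset.subset_univ _, hcard⟩)
      rw [Finset.sum_insert hdT] at hle
      have hTc : ∑ x ∈ T, a x = a c + ∑ x ∈ T.erase c, a x :=
        (Finset.add_sum_erase _ _ hc).symm
      omega
    have hrest : k' * ∑ c ∈ Tᶜ, a c ≤ (k - k') * ∑ c ∈ T, a c := by
      have h1 : ∀ d ∈ Tᶜ, k' * a d ≤ ∑ c ∈ T, a c := by
        intro d hd
        rw [Finset.mem_compl] at hd
        calc k' * a d = ∑ _c ∈ T, a d := by rw [Finset.sum_const, hTcard, smul_eq_mul]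
          _ ≤ ∑ c ∈ T, a c := Finset.sum_le_sum fun c hc => hswap c hc d hd
      calc k' * ∑ c ∈ Tᶜ, a c = ∑ d ∈ Tᶜ, k' * a d := Finset.mul_sum ..
        _ ≤ ∑ _d ∈ Tᶜ, ∑ c ∈ T, a c := Finset.sum_le_sum h1
        _ = (k - k') * ∑ c ∈ T, a c := by
            rw [Finset.sum_const, Finset.card_compl, hTcard, Fintype.card_fin, smul_eq_mul]
    have hsplit : ∑ c ∈ T, a c + ∑ c ∈ Tᶜ, a c = n := by
      rw [Finset.sum_add_sum_compl, hsum, hn]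
    have hkey : n * k' ≤ k * ∑ c ∈ T, a c := by
      have hk'k : k' + (k - k') = k := by omega
      calc n * k' = k' * ∑ c ∈ T, a c + k' * ∑ c ∈ Tᶜ, a c := by
            rw [← Nat.mul_add, hsplit, Nat.mul_comm]
        _ ≤ k' * ∑ c ∈ T, a c + (k - k') * ∑ c ∈ T, a c := by (gcongr ?_ + ?_); omega
        _ = k * ∑ c ∈ T, a c := by rw [← Nat.add_mul, hk'k]
    refine ⟨↑(Finset.univ.filter fun v => f v ∈ T), ?_, ?_, ?_⟩
    · rw [Set.ncard_coe_finset]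
      have hScard : (Finset.univ.filter fun v => f v ∈ T).card = ∑ c ∈ T, a c := by
        rw [ha]
        rw [Finset.card_eq_sum_card_fiberwise
          (fun v hv => by simpa using (Finset.mem_filter.mp hv).2)]
        refine Finset.sum_congr rfl fun c hc => ?_
        congr 1
        ext v
        simp only [Finset.mem_filter, Finset.mem_univ, true_and]
        exact ⟨fun h => h.2, fun h => ⟨by rw [h]; exact hc, h⟩⟩
      rw [hScard]
      rw [Nat.div_le_iff_le_mul_add_pred hk]
      omega
    · have : ∀ v : ↑(↑(Finset.univ.filter fun v => f v ∈ T) : Set V), f ↑v ∈ T := by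
        rintro ⟨v, hv⟩; simpa using hv
      have C1 : (G.induce ↑(Finset.univ.filter fun v => f v ∈ T)).Coloring {c // c ∈ T} := by
        refine SimpleGraph.Coloring.mk (fun v => ⟨f ↑v, this v⟩) ?_
        rintro ⟨v, hv⟩ ⟨w, hw⟩ hadj
        simp only [SimpleGraph.comap_adj, Function.Embedding.coe_subtype] at hadj
        simpa [Subtype.ext_iff] using C.valid hadj
      have := C1.colorable
      rwa [Fintype.card_coe, hTcard] at this
    · have hmem : ∀ v : ↑((↑(Finset.univ.filter fun v => f v ∈ T) : Set V)ᶜ), f ↑v ∈ Tᶜ := by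
        rintro ⟨v, hv⟩; simpa using hv
      have C2 : (G.induce (↑(Finset.univ.filter fun v => f v ∈ T) : Set V)ᶜ).Coloring
          {c // c ∈ Tᶜ} := by
        refine SimpleGraph.Coloring.mk (fun v => ⟨f ↑v, hmem v⟩) ?_
        rintro ⟨v, hv⟩ ⟨w, hw⟩ hadj
        simp only [SimpleGraph.comap_adj, Function.Embedding.coe_subtype] at hadj
        simpa [Subtype.ext_iff] using C.valid hadj
      have := C2.colorable
      rwa [Fintype.card_coe, Finset.card_compl, hTcard, Fintype.card_fin] at this
  · rintro ⟨S, -, ⟨C1⟩, ⟨C2⟩⟩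
    have hC : G.Coloring (Fin k' ⊕ Fin (k - k')) := by
      refine SimpleGraph.Coloring.mk
        (fun v => if h : v ∈ S then Sum.inl (C1 ⟨v, h⟩) else Sum.inr (C2 ⟨v, h⟩)) ?_
      intro v w hadj
      by_cases hv : v ∈ S <;> by_cases hw : w ∈ S <;> simp [hv, hw]
      · exact C1.valid (by simpa using hadj)
      · exact C2.valid (by simpa using hadj)
    have := hC.colorable
    rwa [Fintype.card_sum, Fintype.card_fin, Fintype.card_fin, Nat.add_sub_cancel' hkk.le]
      at this
end

section
/- Let G be a finite simple graph on n vertices and k ≥ 1. Then G is k-colorable if and only if there exists a maximal independent set I of G with |I| ≥ ⌈n/k⌉ such that the induced subgraph G[V∖I] is (k−1)-colorable. -/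
theorem stmt_5 {V : Type*} [Fintype V] (G : SimpleGraph V) (n : ℕ) (hn : n = Fintype.card V)
    (hn1 : 1 ≤ n) (k : ℕ) (hk : 1 ≤ k) :
    G.Colorable k ↔
      ∃ I : Set V, G.IsMaxIndepSet I ∧ (n + k - 1) / k ≤ I.ncard ∧
        (G.induce Iᶜ).Colorable (k - 1) := by
  classical
  constructor
  · rintro ⟨C⟩
    -- pigeonhole: some color class has size ≥ ⌈n/k⌉
    have hsum : (Finset.univ : Finset V).card =
        ∑ c ∈ (Finset.univ : Finset (Fin k)), (Finset.univ.filter fun v => C v = c).card :=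
      Finset.card_eq_sum_card_fiberwise (fun x _ => Finset.mem_univ _)
    have hkpos : 0 < k := hk
    obtain ⟨c, hc⟩ : ∃ c : Fin k, (n + k - 1) / k ≤ (Finset.univ.filter fun v => C v = c).card := by
      by_contra h
      push_neg at h
      have hb : ∀ c : Fin k, (Finset.univ.filter fun v => C v = c).card ≤ (n + k - 1) / k - 1 := by
        intro c; have := h c; omega
      have : (Finset.univ : Finset V).card ≤ k * ((n + k - 1) / k - 1) := by
        rw [hsum]
        calc ∑ c ∈ (Finset.univ : Finset (Fin k)), (Finset.univ.filter fun v => C v = c).card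
            ≤ ∑ _c ∈ (Finset.univ : Finset (Fin k)), ((n + k - 1) / k - 1) :=
              Finset.sum_le_sum fun c _ => hb c
          _ = k * ((n + k - 1) / k - 1) := by simp [Finset.card_univ, mul_comm]
      have hdiv : k * ((n + k - 1) / k) ≤ n + k - 1 := Nat.mul_div_le _ _
      have hdivpos : 1 ≤ (n + k - 1) / k := by
        have : k ≤ n + k - 1 := by omega
        exact (Nat.one_le_div_iff hkpos).mpr this
      rw [Finset.card_univ, ← hn] at this
      have hmul : k * ((n + k - 1) / k - 1) = k * ((n + k - 1) / k) - k := by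
        rw [Nat.mul_sub, mul_one]
      have hq : k * 1 ≤ k * ((n + k - 1) / k) := Nat.mul_le_mul_left k hdivpos
      omega
    set Jf : Finset V := Finset.univ.filter fun v => C v = c with hJf
    -- extend to maximal independent set
    set P : Finset V → Prop := fun s => G.IsIndepSet' ↑s ∧ Jf ⊆ s with hP
    set 𝒜 : Finset (Finset V) := Finset.univ.filter P with h𝒜
    have hJmem : Jf ∈ 𝒜 := by
      simp only [h𝒜, Finset.mem_filter, Finset.mem_univ, true_and, hP]
      refine ⟨?_, subset_rfl⟩
      intro v hv w hw hvw
      simp only [hJf, Finset.coe_filter, Set.mem_setOf_eq] at hv hw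
      exact C.valid hvw (hv.2.trans hw.2.symm)
    obtain ⟨s, hs𝒜, hsmax⟩ := Finset.exists_max_image 𝒜 Finset.card ⟨Jf, hJmem⟩
    simp only [h𝒜, Finset.mem_filter, Finset.mem_univ, true_and, hP] at hs𝒜
    obtain ⟨hsind, hJs⟩ := hs𝒜
    refine ⟨↑s, ⟨hsind, ?_⟩, ?_, ?_⟩
    · intro t htind hst
      have hts : t.toFinset ∈ 𝒜 := by
        simp only [h𝒜, Finset.mem_filter, Finset.mem_univ, true_and, hP]
        refine ⟨by simpa using htind, ?_⟩
        intro x hx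
        exact Set.mem_toFinset.mpr (hst (Finset.mem_coe.mpr (hJs hx)))
      have hcard := hsmax _ hts
      have hsub : s ⊆ t.toFinset := fun x hx => Set.mem_toFinset.mpr (hst hx)
      have := Finset.eq_of_subset_of_card_le hsub hcard
      rw [this]; simp
    · calc (n + k - 1) / k ≤ Jf.card := hc
        _ ≤ s.card := Finset.card_le_card hJs
        _ = (↑s : Set V).ncard := (Set.ncard_coe_finset s).symm
    · -- coloring of the complement with k-1 colors
      have hnotc : ∀ v : V, v ∈ (↑s : Set V)ᶜ → C v ≠ c := by
        intro v hv hvc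
        exact hv (hJs (by simp [hJf, hvc]))
      refine ⟨SimpleGraph.Coloring.mk
        (fun v => if hlt : (C v.1).val < c.val then ⟨(C v.1).val, by
            have h2 := c.isLt; omega⟩
          else ⟨(C v.1).val - 1, by
            have h1 := (C v.1).isLt
            have h3 : (C v.1).val ≠ c.val := fun h => hnotc v.1 v.2 (Fin.ext h)
            omega⟩) ?_⟩
      rintro ⟨v, hv⟩ ⟨w, hw⟩ hadj heq
      have hGadj : G.Adj v w := hadj
      have hne : C v ≠ C w := C.valid hGadj
      have hvne : (C v).val ≠ c.val := fun h => hnotc v hv (Fin.ext h)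
      have hwne : (C w).val ≠ c.val := fun h => hnotc w hw (Fin.ext h)
      have hvalne : (C v).val ≠ (C w).val := fun h => hne (Fin.ext h)
      dsimp only at heq
      split_ifs at heq <;> simp only [Fin.mk.injEq] at heq <;> omega
  · rintro ⟨I, hI, _, ⟨f⟩⟩
    refine ⟨SimpleGraph.Coloring.mk
      (fun v => if h : v ∈ I then ⟨0, hk⟩ else
        ⟨(f ⟨v, h⟩).val + 1, by have := (f ⟨v, h⟩).isLt; omega⟩) ?_⟩
    intro v w hadj heq
    by_cases hv : v ∈ I <;> by_cases hw : w ∈ I <;>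
      simp only [hv, hw, dif_pos, dif_neg, not_false_iff, Fin.mk.injEq] at heq
    · exact hI.1 v hv w hw hadj
    · omega
    · omega
    · exact f.valid (by exact hadj : (G.induce Iᶜ).Adj ⟨v, hv⟩ ⟨w, hw⟩) (Fin.ext (by omega))
end

section
/- The function E(δ) := ((⌊1/δ⌋+1)δ − 1)·log₂⌊1/δ⌋ + (1 − ⌊1/δ⌋·δ)·log₂(⌊1/δ⌋+1), defined for δ ∈ (0,1), attains its maximum over (0,1) at δ = 1/3, with E(1/3) = (log₂ 3)/3. -/
/-- The exponent function `E(δ)` of Byskov's bound. -/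
noncomputable def Efun (δ : ℝ) : ℝ :=
  (((⌊1/δ⌋ : ℝ) + 1) * δ - 1) * Real.logb 2 (⌊1/δ⌋ : ℝ)
    + (1 - (⌊1/δ⌋ : ℝ) * δ) * Real.logb 2 ((⌊1/δ⌋ : ℝ) + 1)

lemma cube_le_three_pow (k : ℕ) : k ^ 3 ≤ 3 ^ k := by
  induction k with
  | zero => norm_num
  | succ n ih =>
    rcases Nat.lt_or_ge n 3 with h | h
    · interval_cases n <;> norm_num
    · have h2 : 3 * n ≤ n * n := by nlinarith
      calc (n + 1) ^ 3 ≤ 3 * n ^ 3 := by nlinarith [h2, Nat.mul_le_mul_right n h2]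
        _ ≤ 3 * 3 ^ n := Nat.mul_le_mul_left 3 ih
        _ = 3 ^ (n + 1) := by ring

lemma logb_div_le (k : ℕ) (hk : 1 ≤ k) :
    Real.logb 2 k ≤ (k : ℝ) * (Real.logb 2 3 / 3) := by
  have h1 : Real.logb 2 ((k : ℝ) ^ 3) ≤ Real.logb 2 ((3 : ℝ) ^ k) := by
    apply Real.logb_le_logb_of_le (by norm_num) (by positivity)
    exact_mod_cast cube_le_three_pow k
  rw [Real.logb_pow, Real.logb_pow] at h1
  have hk' : (0:ℝ) < k := by exact_mod_cast hk
  -- h1 : 3 * logb 2 k ≤ k * logb 2 3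
  push_cast at h1
  nlinarith [h1]

lemma Efun_third : Efun (1/3) = Real.logb 2 3 / 3 := by
  have h3 : ⌊(1:ℝ)/(1/3)⌋ = 3 := by norm_num
  rw [Efun, h3]
  push_cast
  ring

theorem stmt_9 :
    (∀ δ ∈ Set.Ioo (0:ℝ) 1, Efun δ ≤ Efun (1/3)) ∧ Efun (1/3) = Real.logb 2 3 / 3 := by
  refine ⟨?_, Efun_third⟩
  intro δ hδ
  obtain ⟨h0, h1⟩ := hδ
  rw [Efun_third]
  have hδinv : 1 < 1/δ := by rw [lt_div_iff₀ h0]; linarith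
  set n : ℤ := ⌊1/δ⌋ with hn
  have hn1 : 1 ≤ n := Int.le_floor.mpr (by exact_mod_cast hδinv.le)
  have hfl : (n:ℝ) ≤ 1/δ := Int.floor_le _
  have hfu : 1/δ < (n:ℝ) + 1 := Int.lt_floor_add_one _
  have hb : (n:ℝ) * δ ≤ 1 := by
    have := (le_div_iff₀ h0).mp hfl
    linarith
  have ha : 1 ≤ ((n:ℝ) + 1) * δ := ((div_lt_iff₀ h0).mp hfu).le
  have hcast : ((n.toNat : ℕ) : ℝ) = (n : ℝ) := by
    exact_mod_cast Int.toNat_of_nonneg (by linarith)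
  have hkn : 1 ≤ n.toNat := by omega
  have hx : Real.logb 2 (n:ℝ) ≤ (n:ℝ) * (Real.logb 2 3 / 3) := by
    have := logb_div_le n.toNat hkn
    rwa [hcast] at this
  have hy : Real.logb 2 ((n:ℝ) + 1) ≤ ((n:ℝ) + 1) * (Real.logb 2 3 / 3) := by
    have := logb_div_le (n.toNat + 1) (by omega)
    push_cast at this
    rwa [hcast] at this
  rw [Efun, ← hn]
  set M := Real.logb 2 3 / 3
  set X := Real.logb 2 (n:ℝ)
  set Y := Real.logb 2 ((n:ℝ) + 1)
  have ha' : 0 ≤ ((n:ℝ) + 1) * δ - 1 := by linarith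
  have hb' : 0 ≤ 1 - (n:ℝ) * δ := by linarith
  have k1 : (((n:ℝ) + 1) * δ - 1) * X ≤ (((n:ℝ) + 1) * δ - 1) * ((n:ℝ) * M) :=
    mul_le_mul_of_nonneg_left hx ha'
  have k2 : (1 - (n:ℝ) * δ) * Y ≤ (1 - (n:ℝ) * δ) * (((n:ℝ) + 1) * M) :=
    mul_le_mul_of_nonneg_left hy hb'
  have k3 : (((n:ℝ) + 1) * δ - 1) * ((n:ℝ) * M) + (1 - (n:ℝ) * δ) * (((n:ℝ) + 1) * M) = M := by
    ring
  linarith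
end

section
/- The function E(δ) := ((⌊1/δ⌋+1)δ − 1)·log₂⌊1/δ⌋ + (1 − ⌊1/δ⌋·δ)·log₂(⌊1/δ⌋+1) is concave on (0,1); in particular, on each interval [1/(s+1), 1/s] for integer s ≥ 1 it is linear, and it is continuous on (0,1). -/
open Real

lemma Real.logb_add_logb_add_two_le {b x : ℝ} (hb : 1 < b) (hx : 0 < x) :
    logb b x + logb b (x + 2) ≤ 2 * logb b (x + 1) := by
  rw [← logb_mul hx.ne' (by positivity), show 2 * logb b (x + 1) = logb b ((x + 1) ^ 2) by
    rw [logb_pow]; norm_num]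
  exact logb_le_logb_of_le hb (by positivity) (by nlinarith)

namespace Efun

noncomputable def piece (s : ℕ) (δ : ℝ) : ℝ :=
  ((s + 1) * δ - 1) * logb 2 s + (1 - s * δ) * logb 2 (s + 1)

lemma piece_eq_affine (s : ℕ) (δ : ℝ) :
    piece s δ = ((s + 1) * logb 2 s - s * logb 2 (s + 1)) * δ + (logb 2 (s + 1) - logb 2 s) := by
  unfold piece; ring

lemma piece_succ_sub_piece (s : ℕ) (δ : ℝ) :
    piece (s + 1) δ - piece s δ =
      (2 * logb 2 (s + 1) - logb 2 s - logb 2 (s + 2)) * ((s + 1) * δ - 1) := by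
  unfold piece; push_cast; rw [show (s : ℝ) + 1 + 1 = s + 2 by ring]; ring

lemma piece_le_piece_succ {s : ℕ} (hs : 1 ≤ s) {δ : ℝ} (h : 1 ≤ (s + 1) * δ) :
    piece s δ ≤ piece (s + 1) δ := by
  have hc := logb_add_logb_add_two_le one_lt_two (x := s) (by positivity)
  nlinarith [piece_succ_sub_piece s δ]

lemma piece_succ_le_piece {s : ℕ} (hs : 1 ≤ s) {δ : ℝ} (h : (s + 1) * δ ≤ 1) :
    piece (s + 1) δ ≤ piece s δ := by
  have hc := logb_add_logb_add_two_le one_lt_two (x := s) (by positivity)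
  nlinarith [piece_succ_sub_piece s δ]

lemma piece_le_piece_of_le {t s : ℕ} (ht : 1 ≤ t) (hts : t ≤ s) {δ : ℝ} (h : 1 ≤ (t + 1) * δ) :
    piece t δ ≤ piece s δ := by
  induction s, hts using Nat.le_induction with
  | base => rfl
  | succ k htk ih =>
    have hk : (t : ℝ) ≤ k := by exact_mod_cast htk
    exact ih.trans (piece_le_piece_succ (ht.trans htk) (by nlinarith))

lemma piece_le_piece_of_ge {s t : ℕ} (hs : 1 ≤ s) (hst : s ≤ t) {δ : ℝ} (hδ : 0 ≤ δ)
    (h : t * δ ≤ 1) : piece t δ ≤ piece s δ := by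
  induction t, hst using Nat.le_induction with
  | base => rfl
  | succ k hsk ih =>
    push_cast at h
    exact (piece_succ_le_piece (hs.trans hsk) h).trans (ih (by nlinarith))

lemma eq_piece_of_floor_eq {δ : ℝ} {s : ℕ} (h : ⌊1 / δ⌋ = s) : Efun δ = piece s δ := by
  unfold Efun piece; rw [h]; push_cast; ring

lemma eq_piece {s : ℕ} (hs : 1 ≤ s) {δ : ℝ} (h₁ : 1 ≤ (s + 1) * δ) (h₂ : s * δ ≤ 1) :
    Efun δ = piece s δ := by
  have hδ : 0 < δ := pos_of_mul_pos_right (one_pos.trans_le h₁) (by positivity)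
  rcases h₁.lt_or_eq with h₁ | h₁
  · refine eq_piece_of_floor_eq (Int.floor_eq_iff.mpr ⟨?_, ?_⟩)
    · rw [le_div_iff₀ hδ]; push_cast; linarith
    · rw [div_lt_iff₀ hδ]; push_cast; linarith
  · -- at `δ = 1/(s+1)` the floor is `s + 1`, but `piece (s+1)` and `piece s` agree there
    have hfloor : ⌊1 / δ⌋ = ((s + 1 : ℕ) : ℤ) := by
      rw [show 1 / δ = ((s + 1 : ℕ) : ℤ) by field_simp; push_cast; linarith, Int.floor_intCast]
    rw [eq_piece_of_floor_eq hfloor]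
    linarith [piece_succ_sub_piece s δ, mul_eq_zero_of_right
      (2 * logb 2 (s + 1) - logb 2 s - logb 2 (s + 2)) (sub_eq_zero.mpr h₁.symm)]

lemma exists_piece_index {δ : ℝ} (hδ : δ ∈ Set.Ioo 0 1) :
    ∃ s : ℕ, 1 ≤ s ∧ 1 ≤ (s + 1) * δ ∧ s * δ ≤ 1 := by
  obtain ⟨hδ₀, hδ₁⟩ := hδ
  have hfloor : 1 ≤ ⌊1 / δ⌋ := Int.le_floor.mpr (by rw [le_div_iff₀ hδ₀]; push_cast; linarith)
  refine ⟨⌊1 / δ⌋.toNat, by omega, ?_⟩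
  have hcast : ((⌊1 / δ⌋.toNat : ℕ) : ℝ) = ⌊1 / δ⌋ := by exact_mod_cast Int.toNat_of_nonneg (by omega)
  rw [hcast]
  constructor
  · nlinarith [Int.lt_floor_add_one (1 / δ), div_mul_cancel₀ (1 : ℝ) hδ₀.ne']
  · nlinarith [Int.floor_le (1 / δ), div_mul_cancel₀ (1 : ℝ) hδ₀.ne']

lemma le_piece {s : ℕ} (hs : 1 ≤ s) {δ : ℝ} (hδ : δ ∈ Set.Ioo 0 1) : Efun δ ≤ piece s δ := by
  obtain ⟨t, ht, h₁, h₂⟩ := exists_piece_index hδ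
  rw [eq_piece ht h₁ h₂]
  rcases le_total t s with hts | hst
  · exact piece_le_piece_of_le ht hts h₁
  · exact piece_le_piece_of_ge hs hst hδ.1.le h₂

end Efun

open Efun in
lemma concaveOn_Efun : ConcaveOn ℝ (Set.Ioo 0 1) Efun := by
  refine ⟨convex_Ioo 0 1, fun x hx y hy a b ha hb hab => ?_⟩
  obtain ⟨t, ht, h₁, h₂⟩ := exists_piece_index (convex_Ioo 0 1 hx hy ha hb hab)
  have hcomb : a * piece t x + b * piece t y = piece t (a * x + b * y) := by
    simp only [piece_eq_affine]; linear_combination (logb 2 (t + 1) - logb 2 t) * hab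
  simp only [smul_eq_mul] at h₁ h₂ ⊢
  calc a * Efun x + b * Efun y
      ≤ a * piece t x + b * piece t y := by
        gcongr
        exacts [le_piece ht hx, le_piece ht hy]
    _ = Efun (a * x + b * y) := by rw [hcomb, eq_piece ht h₁ h₂]

theorem stmt_10 :
    (∀ x ∈ Set.Ioo (0:ℝ) 1, ∀ y ∈ Set.Ioo (0:ℝ) 1, ∀ l ∈ Set.Icc (0:ℝ) 1,
        l * Efun x + (1 - l) * Efun y ≤ Efun (l * x + (1 - l) * y)) ∧
    (∀ s : ℕ, 1 ≤ s → ∃ a b : ℝ,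
        ∀ δ ∈ Set.Icc (1 / ((s:ℝ) + 1)) (1 / (s:ℝ)), Efun δ = a * δ + b) ∧
    ContinuousOn Efun (Set.Ioo (0:ℝ) 1) := by
  refine ⟨fun x hx y hy l hl => concaveOn_Efun.2 hx hy hl.1 (sub_nonneg.mpr hl.2) (by ring),
    fun s hs => ?_, concaveOn_Efun.continuousOn isOpen_Ioo⟩
  have hs' : (0 : ℝ) < s := by exact_mod_cast hs
  exact ⟨_, _, fun δ hδ => (Efun.eq_piece hs ((div_le_iff₀' (by positivity)).mp hδ.1)
    ((le_div_iff₀' hs').mp hδ.2)).trans (Efun.piece_eq_affine s δ)⟩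
end

section
/- For any a ≥ 0 and integer t ≥ 3, the maximum of E(δ) − a·δ over δ ∈ [1/t, 1) is attained at δ = 1/s for some integer s ∈ {3,…,t}, where E(δ) := ((⌊1/δ⌋+1)δ − 1)·log₂⌊1/δ⌋ + (1 − ⌊1/δ⌋·δ)·log₂(⌊1/δ⌋+1). -/
open Real

lemma Efun_one_div_natCast (n : ℕ) : Efun (1 / (n : ℝ)) = logb 2 n / n := by
  rcases n.eq_zero_or_pos with rfl | hn
  · simp [Efun]
  have hn : (n : ℝ) ≠ 0 := by positivity
  rw [Efun, one_div_one_div, Int.floor_natCast, Int.cast_natCast]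
  field_simp
  ring

lemma mul_add_le_max_of_mem_Icc {A B x y z : ℝ} (hxz : x ≤ z) (hzy : z ≤ y) :
    A * z + B ≤ max (A * x + B) (A * y + B) := by
  rcases le_total 0 A with hA | hA
  · exact le_max_of_le_right (by nlinarith)
  · exact le_max_of_le_left (by nlinarith)

noncomputable def breakpointValue (a : ℝ) (m : ℕ) : ℝ :=
  Efun (1 / (m : ℝ)) - a * (1 / (m : ℝ))

lemma breakpointValue_eq (a : ℝ) (m : ℕ) : breakpointValue a m = (logb 2 m - a) / m := by
  rw [breakpointValue, Efun_one_div_natCast]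
  ring

lemma Efun_sub_mul_le_max {n : ℕ} (hn : 0 < n) (a : ℝ) {δ : ℝ}
    (hlow : 1 / ((n : ℝ) + 1) ≤ δ) (hupp : δ ≤ 1 / n) :
    Efun δ - a * δ ≤ max (breakpointValue a (n + 1)) (breakpointValue a n) := by
  rcases hlow.eq_or_lt with rfl | hlow
  · exact le_max_of_le_left (by simp [breakpointValue])
  have hn0 : (0 : ℝ) < n := by exact_mod_cast hn
  have hδ : 0 < δ := lt_of_le_of_lt (by positivity) hlow
  have hfloor : ⌊1 / δ⌋ = n := by
    rw [Int.floor_eq_iff, Int.cast_natCast, le_div_iff₀ hδ, div_lt_iff₀ hδ]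
    rw [div_lt_iff₀ (by positivity)] at hlow
    rw [le_div_iff₀ hn0] at hupp
    constructor <;> linarith
  set A := ((n : ℝ) + 1) * logb 2 n - n * logb 2 ((n : ℝ) + 1) - a
  set B := logb 2 ((n : ℝ) + 1) - logb 2 n
  have haffine : Efun δ - a * δ = A * δ + B := by
    rw [Efun, hfloor, Int.cast_natCast]
    ring
  have hn : breakpointValue a n = A * (1 / n) + B := by
    rw [breakpointValue_eq]
    field_simp
    ring
  have hn1 : breakpointValue a (n + 1) = A * (1 / ((n : ℝ) + 1)) + B := by
    rw [breakpointValue_eq, Nat.cast_succ]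
    field_simp
    ring
  rw [haffine, hn, hn1]
  exact mul_add_le_max_of_mem_Icc hlow.le hupp

lemma three_halves_lt_logb_two_three : (3 : ℝ) / 2 < logb 2 3 := by
  have h : log (2 ^ 3) < log (3 ^ 2) := log_lt_log (by norm_num) (by norm_num)
  rw [log_pow, log_pow] at h
  rw [logb, lt_div_iff₀ (log_pos one_lt_two)]
  push_cast at h
  linarith

lemma breakpointValue_le_three {a : ℝ} (ha : 0 ≤ a) {m : ℕ} (hm0 : 0 < m) (hm : m ≤ 2) :
    breakpointValue a m ≤ breakpointValue a 3 := by
  have hlog3 := three_halves_lt_logb_two_three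
  interval_cases m <;> rw [breakpointValue_eq, breakpointValue_eq] <;> norm_num <;> linarith

lemma exists_one_div_succ_le_le_one_div {t : ℕ} (ht : 0 < t) {δ : ℝ}
    (hδ : δ ∈ Set.Ico (1 / (t : ℝ)) 1) :
    ∃ n : ℕ, 0 < n ∧ n + 1 ≤ t ∧ 1 / ((n : ℝ) + 1) ≤ δ ∧ δ ≤ 1 / n := by
  obtain ⟨hlow, hupp⟩ := hδ
  have ht' : (0 : ℝ) < t := by exact_mod_cast ht
  have hδ : 0 < δ := lt_of_lt_of_le (by positivity) hlow
  have hinv : 1 < 1 / δ := by rwa [lt_div_iff₀ hδ, one_mul]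
  have hinvt : 1 / δ ≤ t := by
    rwa [div_le_iff₀ hδ, mul_comm, ← div_le_iff₀ ht']
  set c := ⌈1 / δ⌉₊
  have hc : 1 < c := Nat.lt_ceil.mpr (by exact_mod_cast hinv)
  refine ⟨c - 1, by omega, by have := Nat.ceil_le.mpr hinvt; omega, ?_, ?_⟩
  · rw [Nat.cast_pred (by omega), sub_add_cancel, div_le_iff₀ (by positivity), mul_comm,
      ← div_le_iff₀ hδ]
    exact Nat.le_ceil _
  · rw [le_div_iff₀ (by norm_cast; omega), mul_comm, ← le_div_iff₀ hδ,
      Nat.cast_pred (by omega), sub_le_iff_le_add]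
    exact (Nat.ceil_lt_add_one (by positivity)).le

theorem stmt_11 (a : ℝ) (ha : 0 ≤ a) (t : ℕ) (ht : 3 ≤ t) :
    ∃ s : ℕ, 3 ≤ s ∧ s ≤ t ∧ (1 / (s:ℝ)) ∈ Set.Ico (1 / (t:ℝ)) 1 ∧
      ∀ δ ∈ Set.Ico (1 / (t:ℝ)) 1,
        Efun δ - a * δ ≤ Efun (1 / (s:ℝ)) - a * (1 / (s:ℝ)) := by
  obtain ⟨s, hs, hs_max⟩ :=
    (Finset.Icc 3 t).exists_max_image (breakpointValue a) (Finset.nonempty_Icc.mpr ht)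
  obtain ⟨hs3, hst⟩ := Finset.mem_Icc.mp hs
  have hbound : ∀ m, 0 < m → m ≤ t → breakpointValue a m ≤ breakpointValue a s := by
    intro m hm hmt
    rcases le_or_gt 3 m with hm3 | hm3
    · exact hs_max m (Finset.mem_Icc.mpr ⟨hm3, hmt⟩)
    · exact (breakpointValue_le_three ha hm (by omega)).trans
        (hs_max 3 (Finset.mem_Icc.mpr ⟨le_rfl, ht⟩))
  have hs0 : (0 : ℝ) < s := by positivity
  refine ⟨s, hs3, hst, ⟨?_, ?_⟩, fun δ hδ => ?_⟩
  · exact one_div_le_one_div_of_le hs0 (by exact_mod_cast hst)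
  · rw [div_lt_one hs0]
    exact_mod_cast (by omega : 1 < s)
  obtain ⟨n, hn, hnt, hlow, hupp⟩ := exists_one_div_succ_le_le_one_div (by omega) hδ
  calc Efun δ - a * δ ≤ max (breakpointValue a (n + 1)) (breakpointValue a n) :=
        Efun_sub_mul_le_max hn a hlow hupp
    _ ≤ breakpointValue a s := max_le (hbound _ (by omega) hnt) (hbound _ hn (by omega))
end

section
/- Let I(n,t) := ⌊n/t⌋^((⌊n/t⌋+1)t − n) · (⌊n/t⌋+1)^(n − ⌊n/t⌋·t) for positive integers t ≤ n. Then every simple graph on n vertices has at most I(n,t) maximal independent sets of size exactly t. -/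
/-- Byskov's bound `I(n,t)` on the number of maximal independent sets of size `t`. -/
def numMIS (n t : ℕ) : ℕ :=
  (n / t) ^ ((n / t + 1) * t - n) * (n / t + 1) ^ (n - (n / t) * t)

theorem numMIS_zero_right (n : ℕ) : numMIS n 0 = 1 := by simp [numMIS]

theorem numMIS_one_right (n : ℕ) : numMIS n 1 = n := by simp [numMIS]

theorem numMIS_mul_add {c i : ℕ} (hi : 0 < i) (j : ℕ) :
    numMIS (c * i + (c + 1) * j) (i + j) = c ^ i * (c + 1) ^ j := by
  have hdiv : (c * i + (c + 1) * j) / (i + j) = c := by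
    rw [show c * i + (c + 1) * j = j + (i + j) * c by ring, Nat.add_mul_div_left _ _ (by omega),
      Nat.div_eq_of_lt (by omega), zero_add]
  rw [numMIS, hdiv]
  congr 2 <;> rw [Nat.sub_eq_of_eq_add] <;> ring

theorem Multiset.eq_replicate_add_replicate {α : Type*} [DecidableEq α] {s : Multiset α} {a b : α}
    (hab : a ≠ b) (h : ∀ x ∈ s, x = a ∨ x = b) :
    s = replicate (s.count a) a + replicate (s.count b) b := by
  ext x
  simp only [count_add, count_replicate]
  by_cases hx : x ∈ s
  · rcases h x hx with rfl | rfl <;> simp [hab, hab.symm]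
  · rw [count_eq_zero_of_notMem hx]
    split_ifs <;> simp_all

theorem Multiset.prod_le_numMIS (s : Multiset ℕ) : s.prod ≤ numMIS s.sum (card s) := by
  induction hN : (s.map (· ^ 2)).sum using Nat.strong_induction_on generalizing s with
  | _ N ih =>
  by_cases hspread : ∃ a ∈ s, ∃ b ∈ s, a + 2 ≤ b
  · -- moving a unit from `b` to `a` raises the product and lowers the sum of squares
    obtain ⟨a, ha, b, hb, hab⟩ := hspread
    obtain ⟨e, rfl⟩ := Nat.exists_eq_add_of_le hab
    obtain ⟨r, rfl⟩ := exists_cons_of_mem ha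
    obtain ⟨r, rfl⟩ := exists_cons_of_mem ((mem_cons.1 hb).resolve_left (by omega))
    subst hN
    have hlt : (((a + 1) ::ₘ (a + 1 + e) ::ₘ r).map (· ^ 2)).sum
        < ((a ::ₘ (a + 2 + e) ::ₘ r).map (· ^ 2)).sum := by
      simp only [map_cons, sum_cons]
      nlinarith
    have hle := ih _ hlt ((a + 1) ::ₘ (a + 1 + e) ::ₘ r) rfl
    simp only [prod_cons, sum_cons, card_cons] at hle ⊢
    calc a * ((a + 2 + e) * r.prod) ≤ (a + 1) * ((a + 1 + e) * r.prod) := by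
          rw [← mul_assoc, ← mul_assoc]; gcongr ?_ * _; nlinarith
      _ ≤ _ := hle
      _ = _ := by congr 1; omega
  · push Not at hspread
    rcases eq_or_ne s 0 with rfl | hs
    · simp [numMIS_zero_right]
    obtain ⟨c, hc, hmin⟩ := exists_min_image id hs
    have hbal : ∀ x ∈ s, x = c ∨ x = c + 1 := fun x hx => by
      have hcx : c ≤ x := hmin x hx
      have := hspread c hc x hx
      omega
    rw [eq_replicate_add_replicate (by omega) hbal]
    simp only [prod_add, sum_add, card_add, prod_replicate, sum_replicate, card_replicate,
      smul_eq_mul]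
    rw [mul_comm _ c, mul_comm _ (c + 1), numMIS_mul_add (count_pos.2 hc)]

theorem exists_multiset_prod_eq_numMIS (n : ℕ) {t : ℕ} (ht : 0 < t) :
    ∃ s : Multiset ℕ, Multiset.card s = t ∧ s.sum = n ∧ s.prod = numMIS n t := by
  have hdiv := Nat.div_add_mod n t
  have hmod := Nat.mod_lt n ht
  generalize n / t = q, n % t = r at hdiv hmod
  obtain ⟨i, rfl⟩ := Nat.exists_eq_add_of_lt hmod
  have hn : n = q * (i + 1) + (q + 1) * r := by rw [← hdiv]; ring
  refine ⟨.replicate (i + 1) q + .replicate r (q + 1), ?_, ?_, ?_⟩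
  · simp only [Multiset.card_add, Multiset.card_replicate]; ring
  · simp only [Multiset.sum_add, Multiset.sum_replicate, smul_eq_mul, hn]; ring
  · simp only [Multiset.prod_add, Multiset.prod_replicate]
    rw [hn, show r + i + 1 = i + 1 + r by ring, numMIS_mul_add i.succ_pos]

theorem numMIS_mono_left (t : ℕ) : Monotone fun n => numMIS n t := by
  intro m m' h
  rcases Nat.eq_zero_or_pos t with rfl | ht
  · simp [numMIS_zero_right]
  obtain ⟨s, hcard, hsum, hprod⟩ := exists_multiset_prod_eq_numMIS m ht
  obtain ⟨a, r, rfl⟩ : ∃ a r, s = a ::ₘ r := by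
    obtain ⟨a, ha⟩ := Multiset.card_pos_iff_exists_mem.1 (hcard ▸ ht)
    exact ⟨a, Multiset.exists_cons_of_mem ha⟩
  have hle := Multiset.prod_le_numMIS ((a + (m' - m)) ::ₘ r)
  simp only [Multiset.prod_cons, Multiset.sum_cons, Multiset.card_cons] at hle hcard hsum hprod ⊢
  rw [← hprod, ← hcard]
  calc a * r.prod ≤ (a + (m' - m)) * r.prod := by gcongr; omega
    _ ≤ _ := hle
    _ = _ := by congr 1; omega

theorem mul_numMIS_le_numMIS_succ (a m t : ℕ) : a * numMIS m t ≤ numMIS (a + m) (t + 1) := by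
  rcases Nat.eq_zero_or_pos t with rfl | ht
  · simp [numMIS_zero_right, numMIS_one_right]
  obtain ⟨s, hcard, hsum, hprod⟩ := exists_multiset_prod_eq_numMIS m ht
  simpa [hcard, hsum, hprod] using Multiset.prod_le_numMIS (a ::ₘ s)

namespace SimpleGraph

variable {V : Type*} (G : SimpleGraph V)

def closedNeighborSet (v : V) : Set V := insert v (G.neighborSet v)

variable {G}

theorem mem_closedNeighborSet {v w : V} : w ∈ G.closedNeighborSet v ↔ w = v ∨ G.Adj v w :=
  Iff.rfl

theorem IsMaxIndepSet.isIndepSet' {s : Set V} (hs : G.IsMaxIndepSet s) : G.IsIndepSet' s := hs.1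

theorem IsIndepSet'.insert_of_not_adj {s : Set V} {v : V} (hs : G.IsIndepSet' s)
    (hv : ∀ w ∈ s, ¬G.Adj v w) : G.IsIndepSet' (insert v s) := by
  rintro x (rfl | hx) y (rfl | hy) hxy
  · exact G.irrefl hxy
  · exact hv y hy hxy
  · exact hv x hx hxy.symm
  · exact hs x hx y hy hxy

theorem IsMaxIndepSet.exists_mem_closedNeighborSet {s : Set V} (hs : G.IsMaxIndepSet s) (v : V) :
    ∃ u ∈ G.closedNeighborSet v, u ∈ s := by
  by_contra! h
  have hindep := hs.isIndepSet'.insert_of_not_adj fun w hw hvw => h w (Or.inr hvw) hw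
  exact h v (Set.mem_insert v _) (hs.2 _ hindep (Set.subset_insert v s) ▸ Set.mem_insert v s)

theorem IsIndepSet'.subset_insert_compl_closedNeighborSet {s : Set V} {u : V}
    (hs : G.IsIndepSet' s) (hu : u ∈ s) : s ⊆ insert u (G.closedNeighborSet u)ᶜ := by
  intro w hw
  by_cases hwu : w = u
  · exact Or.inl hwu
  · exact Or.inr fun hw' => (mem_closedNeighborSet.1 hw').elim hwu (hs u hu w hw)

theorem IsIndepSet'.insert_image_val_preimage {s : Set V} {u : V} (hs : G.IsIndepSet' s)
    (hu : u ∈ s) :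
    insert u (Subtype.val '' (Subtype.val ⁻¹' s : Set ↥(G.closedNeighborSet u)ᶜ)) = s := by
  rw [Subtype.image_preimage_coe, Set.insert_inter_distrib, Set.insert_eq_of_mem hu,
    Set.inter_eq_right.2 (hs.subset_insert_compl_closedNeighborSet hu)]

theorem IsMaxIndepSet.induce_compl_closedNeighborSet {s : Set V} {u : V} (hs : G.IsMaxIndepSet s)
    (hu : u ∈ s) :
    (G.induce (G.closedNeighborSet u)ᶜ).IsMaxIndepSet (Subtype.val ⁻¹' s) := by
  refine ⟨fun x hx y hy => hs.isIndepSet' x hx y hy, fun T hT hsT => ?_⟩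
  have hindep : G.IsIndepSet' (insert u (Subtype.val '' T)) := by
    refine IsIndepSet'.insert_of_not_adj ?_ ?_
    · rintro _ ⟨x, hx, rfl⟩ _ ⟨y, hy, rfl⟩
      exact hT x hx y hy
    · rintro _ ⟨x, -, rfl⟩ hux
      exact x.2 (Or.inr hux)
  have hsub : s ⊆ insert u (Subtype.val '' T) := by
    rw [← hs.isIndepSet'.insert_image_val_preimage hu]
    exact Set.insert_subset_insert (Set.image_mono hsT)
  refine hsT.antisymm fun x hx => ?_
  rw [Set.mem_preimage, hs.2 _ hindep hsub]
  exact Or.inr ⟨x, hx, rfl⟩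

theorem ncard_isMaxIndepSet_mem_le [Finite V] (t : ℕ) (u : V) :
    {I : Finset V | G.IsMaxIndepSet ↑I ∧ I.card = t + 1 ∧ u ∈ I}.ncard ≤
      {J : Finset ↥(G.closedNeighborSet u)ᶜ |
        (G.induce (G.closedNeighborSet u)ᶜ).IsMaxIndepSet ↑J ∧ J.card = t}.ncard := by
  classical
  set W := (G.closedNeighborSet u)ᶜ
  have hcoe (I : Finset V) : (↑(I.subtype (· ∈ W)) : Set W) = Subtype.val ⁻¹' ↑I :=
    Set.ext fun _ => Finset.mem_subtype
  refine Set.ncard_le_ncard_of_injOn (fun I => I.subtype (· ∈ W)) ?_ ?_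
  · rintro I ⟨hI, hcard, hu⟩
    refine ⟨hcoe I ▸ hI.induce_compl_closedNeighborSet hu, ?_⟩
    have hfilter : I.filter (· ∈ W) = I.filter (· ≠ u) := Finset.filter_congr fun x hx =>
      ⟨fun hxW hxu => hxW (hxu ▸ Set.mem_insert x _),
        fun hxu => ((hI.isIndepSet'.subset_insert_compl_closedNeighborSet hu) hx).resolve_left hxu⟩
    rw [Finset.card_subtype, hfilter, Finset.filter_ne', Finset.card_erase_of_mem hu, hcard,
      Nat.add_sub_cancel]
  · rintro I ⟨hI, -, hu⟩ I' ⟨hI', -, hu'⟩ h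
    have hpre : (Subtype.val ⁻¹' ↑I : Set W) = Subtype.val ⁻¹' ↑I' := by
      rw [← hcoe, ← hcoe]; exact congrArg _ h
    rw [← Finset.coe_inj, ← hI.isIndepSet'.insert_image_val_preimage hu,
      ← hI'.isIndepSet'.insert_image_val_preimage hu', hpre]

theorem ncard_isMaxIndepSet_le_sum_mem [Finite V] (t : ℕ) (v : V) :
    {I : Finset V | G.IsMaxIndepSet ↑I ∧ I.card = t}.ncard ≤
      ∑ u ∈ (G.closedNeighborSet v).toFinite.toFinset,
        {I : Finset V | G.IsMaxIndepSet ↑I ∧ I.card = t ∧ u ∈ I}.ncard := by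
  refine le_trans (Set.ncard_le_ncard fun I hI => ?_) (Finset.set_ncard_biUnion_le _ _)
  obtain ⟨u, hu, huI⟩ := hI.1.exists_mem_closedNeighborSet v
  exact Set.mem_biUnion ((Set.Finite.mem_toFinset _).2 hu) ⟨hI.1, hI.2, huI⟩

theorem card_compl_closedNeighborSet [Finite V] (u : V) :
    Nat.card ↥(G.closedNeighborSet u)ᶜ = Nat.card V - (G.closedNeighborSet u).ncard := by
  rw [Nat.card_coe_set_eq, Set.ncard_compl]

variable (G) in
theorem ncard_isMaxIndepSet_le_numMIS [Finite V] (t : ℕ) :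
    {I : Finset V | G.IsMaxIndepSet ↑I ∧ I.card = t}.ncard ≤ numMIS (Nat.card V) t := by
  induction t generalizing V with
  | zero =>
    calc _ ≤ ({∅} : Set (Finset V)).ncard :=
          Set.ncard_le_ncard fun I hI => Finset.card_eq_zero.1 hI.2
      _ = numMIS (Nat.card V) 0 := by rw [Set.ncard_singleton, numMIS_zero_right]
  | succ t ih =>
    cases isEmpty_or_nonempty V
    · have hempty : {I : Finset V | G.IsMaxIndepSet ↑I ∧ I.card = t + 1} = ∅ :=
        Set.eq_empty_of_forall_notMem fun I hI => by simp [Finset.eq_empty_of_isEmpty I] at hI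
      simp [hempty]
    obtain ⟨v, hv⟩ := Finite.exists_min fun w => (G.closedNeighborSet w).ncard
    set d := (G.closedNeighborSet v).ncard
    calc _ ≤ ∑ u ∈ (G.closedNeighborSet v).toFinite.toFinset,
          {I : Finset V | G.IsMaxIndepSet ↑I ∧ I.card = t + 1 ∧ u ∈ I}.ncard :=
          ncard_isMaxIndepSet_le_sum_mem (t + 1) v
      _ ≤ ∑ u ∈ (G.closedNeighborSet v).toFinite.toFinset, numMIS (Nat.card V - d) t :=
          Finset.sum_le_sum fun u _ => (ncard_isMaxIndepSet_mem_le t u).trans <|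
            (ih (G.induce _)).trans <| numMIS_mono_left t <| by
              rw [card_compl_closedNeighborSet]; have := hv u; omega
      _ = d * numMIS (Nat.card V - d) t := by
          rw [Finset.sum_const, smul_eq_mul, ← Set.ncard_eq_toFinset_card]
      _ ≤ numMIS (Nat.card V) (t + 1) := by
          have hd : d ≤ Nat.card V := Set.ncard_le_card _
          simpa only [Nat.add_sub_cancel' hd] using mul_numMIS_le_numMIS_succ d (Nat.card V - d) t

end SimpleGraph

theorem stmt_12_general {V : Type*} [Fintype V] (G : SimpleGraph V) (n : ℕ)
    (hn : n = Fintype.card V) (t : ℕ) :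
    {I : Finset V | G.IsMaxIndepSet ↑I ∧ I.card = t}.ncard ≤ numMIS n t := by
  rw [hn, ← Nat.card_eq_fintype_card]
  exact G.ncard_isMaxIndepSet_le_numMIS t

theorem stmt_12 {V : Type*} [Fintype V] (G : SimpleGraph V) (n : ℕ)
    (hn : n = Fintype.card V) (t : ℕ) (ht1 : 1 ≤ t) (htn : t ≤ n) :
    {I : Finset V | G.IsMaxIndepSet ↑I ∧ I.card = t}.ncard ≤ numMIS n t :=
  stmt_12_general G n hn t
end

section
/- With I(n,t) := ⌊n/t⌋^((⌊n/t⌋+1)t − n)·(⌊n/t⌋+1)^(n − ⌊n/t⌋·t), we have I(n,t) ≤ 3^(n/3) for all 1 ≤ t ≤ n, and ∑_{t=1}^{n} I(n,t) ≤ n·3^(n/3). -/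
lemma cube_le_three_pow_s13 : ∀ m : ℕ, m ^ 3 ≤ 3 ^ m := by
  intro m
  induction m with
  | zero => norm_num
  | succ k ih =>
    rcases lt_or_ge k 3 with hk | hk
    · interval_cases k <;> norm_num
    · have h1 : (k + 1) ^ 3 ≤ 3 * k ^ 3 := by
        zify
        nlinarith [hk, sq_nonneg ((k:ℤ) - 3), sq_nonneg ((k:ℤ) - 1)]
      calc (k + 1) ^ 3 ≤ 3 * k ^ 3 := h1
        _ ≤ 3 * 3 ^ k := by omega
        _ = 3 ^ (k + 1) := by ring

lemma nat_le_rpow (m : ℕ) : (m : ℝ) ≤ (3:ℝ) ^ ((m : ℝ) / 3) := by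
  have h : ((m : ℝ)) ^ (3:ℕ) ≤ (3:ℝ) ^ (m:ℕ) := by exact_mod_cast cube_le_three_pow_s13 m
  have h1 : ((m : ℝ) ^ (3:ℕ)) ^ ((1:ℝ)/3) ≤ ((3:ℝ) ^ (m:ℕ)) ^ ((1:ℝ)/3) :=
    Real.rpow_le_rpow (by positivity) h (by norm_num)
  have h2 : ((m : ℝ) ^ (3:ℕ)) ^ ((1:ℝ)/3) = (m : ℝ) := by
    rw [← Real.rpow_natCast (m:ℝ) 3, ← Real.rpow_mul (by positivity)]
    norm_num
  have h3 : ((3:ℝ) ^ (m:ℕ)) ^ ((1:ℝ)/3) = (3:ℝ) ^ ((m : ℝ) / 3) := by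
    rw [← Real.rpow_natCast (3:ℝ) m, ← Real.rpow_mul (by norm_num)]
    ring_nf
  rw [h2, h3] at h1
  exact h1

theorem stmt_13 (n : ℕ) :
    (∀ t : ℕ, 1 ≤ t → t ≤ n → (numMIS n t : ℝ) ≤ (3:ℝ) ^ ((n:ℝ) / 3)) ∧
    (∑ t ∈ Finset.Icc 1 n, (numMIS n t : ℝ)) ≤ (n:ℝ) * (3:ℝ) ^ ((n:ℝ) / 3) := by
  have key : ∀ t : ℕ, 1 ≤ t → t ≤ n → (numMIS n t : ℝ) ≤ (3:ℝ) ^ ((n:ℝ) / 3) := by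
    intro t ht htn
    set q := n / t with hq
    set r := n % t with hrdef
    have hn : q * t + r = n := Nat.div_add_mod' n t
    have hr : r < t := Nat.mod_lt _ (by omega)
    have hqt : (q + 1) * t = q * t + t := by ring
    have e1 : (q + 1) * t - n = t - r := by omega
    have e2 : n - q * t = r := by omega
    have hval : (numMIS n t : ℝ) = (q:ℝ) ^ (t - r) * ((q:ℝ) + 1) ^ r := by
      rw [numMIS, ← hq, e1, e2]
      push_cast
      ring
    have b1 : (q:ℝ) ^ (t - r) ≤ ((3:ℝ) ^ ((q:ℝ)/3)) ^ (t - r) :=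
      pow_le_pow_left₀ (by positivity) (nat_le_rpow q) _
    have b2 : ((q:ℝ) + 1) ^ r ≤ ((3:ℝ) ^ (((q:ℝ)+1)/3)) ^ r := by
      have := nat_le_rpow (q + 1)
      push_cast at this
      exact pow_le_pow_left₀ (by positivity) this _
    have hprod : ((3:ℝ) ^ ((q:ℝ)/3)) ^ (t - r) * ((3:ℝ) ^ (((q:ℝ)+1)/3)) ^ r
        = (3:ℝ) ^ ((n:ℝ)/3) := by
      rw [← Real.rpow_natCast ((3:ℝ) ^ ((q:ℝ)/3)) (t - r),
          ← Real.rpow_natCast ((3:ℝ) ^ (((q:ℝ)+1)/3)) r,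
          ← Real.rpow_mul (by norm_num), ← Real.rpow_mul (by norm_num),
          ← Real.rpow_add (by norm_num)]
      congr 1
      have hc : (q:ℝ) * t + r = n := by exact_mod_cast hn
      have htr : ((t - r : ℕ) : ℝ) = (t:ℝ) - r := by
        push_cast [Nat.cast_sub hr.le]; ring
      rw [htr]
      linear_combination hc / 3
    calc (numMIS n t : ℝ) = (q:ℝ) ^ (t - r) * ((q:ℝ) + 1) ^ r := hval
      _ ≤ ((3:ℝ) ^ ((q:ℝ)/3)) ^ (t - r) * ((3:ℝ) ^ (((q:ℝ)+1)/3)) ^ r := by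
          apply mul_le_mul b1 b2 (by positivity) (by positivity)
      _ = (3:ℝ) ^ ((n:ℝ)/3) := hprod
  refine ⟨key, ?_⟩
  calc (∑ t ∈ Finset.Icc 1 n, (numMIS n t : ℝ))
      ≤ ∑ t ∈ Finset.Icc 1 n, (3:ℝ) ^ ((n:ℝ)/3) := by
        apply Finset.sum_le_sum
        intro t hts
        rw [Finset.mem_Icc] at hts
        exact key t hts.1 hts.2
    _ = (n:ℝ) * (3:ℝ) ^ ((n:ℝ)/3) := by
        rw [Finset.sum_const, Nat.card_Icc]
        simp [nsmul_eq_mul]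
end

section
/- For a fixed δ ∈ (0,1), with t = ⌊δn⌋, the quantity I(n,t) := ⌊n/t⌋^((⌊n/t⌋+1)t − n)·(⌊n/t⌋+1)^(n − ⌊n/t⌋·t) satisfies I(n, ⌊δn⌋) ≤ C·2^(E(δ)·n) for some constant C depending only on δ, where E(δ) := ((⌊1/δ⌋+1)δ − 1)·log₂⌊1/δ⌋ + (1 − ⌊1/δ⌋δ)·log₂(⌊1/δ⌋+1). -/
theorem stmt_14 (δ : ℝ) (hδ : δ ∈ Set.Ioo (0:ℝ) 1) :
    ∃ C : ℝ, 0 < C ∧ ∀ n : ℕ, 1 ≤ ⌊δ * n⌋₊ →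
      (numMIS n ⌊δ * n⌋₊ : ℝ) ≤ C * (2:ℝ) ^ (Efun δ * n) := by
  obtain ⟨hδ0, hδ1⟩ := hδ
  set m : ℕ := ⌊1/δ⌋₊ with hm_def
  have hδinv0 : (0:ℝ) ≤ 1/δ := by positivity
  have hδinv1 : (1:ℝ) ≤ 1/δ := by
    rw [le_div_iff₀ hδ0]; linarith
  have hm1 : 1 ≤ m := Nat.le_floor (by exact_mod_cast hδinv1)
  have hmcast : (⌊1/δ⌋ : ℝ) = (m : ℝ) := (natCast_floor_eq_intCast_floor hδinv0).symm
  have hm0R : (0:ℝ) < m := by exact_mod_cast hm1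
  have hmle : (m : ℝ) ≤ 1/δ := Nat.floor_le hδinv0
  have hmδ : (m : ℝ) * δ ≤ 1 := by
    calc (m:ℝ) * δ ≤ (1/δ) * δ := by nlinarith
    _ = 1 := by field_simp
  have hmlt : 1/δ < (m : ℝ) + 1 := Nat.lt_floor_add_one _
  have hε : 0 < ((m:ℝ) + 1) * δ - 1 := by
    have := (div_lt_iff₀ hδ0).mp hmlt
    linarith
  set ε : ℝ := ((m:ℝ) + 1) * δ - 1 with hε_def
  set L1 : ℝ := Real.logb 2 (m:ℝ) with hL1
  set L2 : ℝ := Real.logb 2 ((m:ℝ)+1) with hL2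
  set D0 : ℝ := |(m:ℝ) * L2 - ((m:ℝ)+1) * L1| with hD0
  set N : ℕ := ⌈((m:ℝ)+1)/ε⌉₊ with hN
  set C : ℝ := (2:ℝ) ^ D0 + ∑ k ∈ Finset.range N,
      (numMIS k ⌊δ * k⌋₊ : ℝ) * (2:ℝ) ^ (-(Efun δ * k)) with hC
  have hEfun : ∀ x : ℝ, Efun δ * x = (((m:ℝ)+1)*(δ*x) - x) * L1 + (x - (m:ℝ)*(δ*x)) * L2 := by
    intro x; rw [Efun, hmcast]; ring
  have hpow_pos : ∀ x : ℝ, (0:ℝ) < (2:ℝ) ^ x := fun x => Real.rpow_pos_of_pos two_pos x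
  have hCpos : 0 < C := by
    rw [hC]
    have : (0:ℝ) ≤ ∑ k ∈ Finset.range N,
        (numMIS k ⌊δ * k⌋₊ : ℝ) * (2:ℝ) ^ (-(Efun δ * k)) := by
      apply Finset.sum_nonneg
      intro k _
      positivity
    have := hpow_pos D0
    linarith
  refine ⟨C, hCpos, ?_⟩
  intro n ht1
  set t : ℕ := ⌊δ * n⌋₊ with htdef
  have ht0 : 0 < t := ht1
  by_cases hn : n < N
  · -- small n: absorbed into the sum
    have hterm : (numMIS n t : ℝ) * (2:ℝ) ^ (-(Efun δ * n)) ≤ C := by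
      rw [hC]
      have hle : (numMIS n t : ℝ) * (2:ℝ) ^ (-(Efun δ * n)) ≤
          ∑ k ∈ Finset.range N, (numMIS k ⌊δ * k⌋₊ : ℝ) * (2:ℝ) ^ (-(Efun δ * k)) := by
        apply Finset.single_le_sum (f := fun k => (numMIS k ⌊δ * k⌋₊ : ℝ) * (2:ℝ) ^ (-(Efun δ * k)))
          (fun k _ => by positivity) (Finset.mem_range.mpr hn)
      have := hpow_pos D0
      linarith
    calc (numMIS n t : ℝ)
        = ((numMIS n t : ℝ) * (2:ℝ) ^ (-(Efun δ * n))) * (2:ℝ) ^ (Efun δ * n) := by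
          rw [mul_assoc, ← Real.rpow_add two_pos]
          simp
      _ ≤ C * (2:ℝ) ^ (Efun δ * n) := by
          apply mul_le_mul_of_nonneg_right hterm (le_of_lt (hpow_pos _))
  · -- large n: n / t = m
    push_neg at hn
    have hnR : ((m:ℝ)+1)/ε ≤ (n:ℝ) := (Nat.ceil_le.mp hn).trans (le_refl _) |>.trans (le_refl _)
    have hεn : (m:ℝ) + 1 ≤ ε * n := by
      rw [div_le_iff₀ hε] at hnR; linarith
    have htle : (t : ℝ) ≤ δ * n := Nat.floor_le (by positivity)
    have htgt : δ * n < (t : ℝ) + 1 := Nat.lt_floor_add_one _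
    have hmtn : m * t ≤ n := by
      have : ((m * t : ℕ) : ℝ) ≤ (n : ℝ) := by
        push_cast
        calc (m:ℝ) * t ≤ (m:ℝ) * (δ * n) := by
              apply mul_le_mul_of_nonneg_left htle (by positivity)
          _ = ((m:ℝ) * δ) * n := by ring
          _ ≤ 1 * n := by
              apply mul_le_mul_of_nonneg_right hmδ (by positivity)
          _ = n := one_mul _
      exact_mod_cast this
    have hnlt : n < (m + 1) * t := by
      have : (n : ℝ) < (((m+1) * t : ℕ) : ℝ) := by
        push_cast
        have h1 : ((m:ℝ)+1) * (δ * n) - ((m:ℝ)+1) < ((m:ℝ)+1) * t := by nlinarith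
        have h2 : (n:ℝ) ≤ ((m:ℝ)+1) * (δ * n) - ((m:ℝ)+1) := by
          have : ((m:ℝ)+1) * (δ * n) = (n:ℝ) + ε * n := by rw [hε_def]; ring
          linarith
        linarith
      exact_mod_cast this
    have hq : n / t = m := Nat.div_eq_of_lt_le hmtn hnlt
    have hnle : n ≤ (m + 1) * t := le_of_lt hnlt
    have hval : (numMIS n t : ℝ) = (m:ℝ) ^ ((m+1)*t - n) * ((m:ℝ)+1) ^ (n - m*t) := by
      rw [numMIS, hq]; push_cast; ring
    have ha : (((m+1)*t - n : ℕ) : ℝ) = ((m:ℝ)+1) * t - n := by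
      rw [Nat.cast_sub hnle]; push_cast; ring
    have hb : ((n - m*t : ℕ) : ℝ) = (n:ℝ) - (m:ℝ) * t := by
      rw [Nat.cast_sub hmtn]; push_cast; ring
    have hrw1 : (m:ℝ) ^ ((m+1)*t - n) = (2:ℝ) ^ ((((m+1)*t - n : ℕ) : ℝ) * L1) := by
      calc (m:ℝ) ^ ((m+1)*t - n) = ((2:ℝ) ^ L1) ^ ((m+1)*t - n) := by
            rw [hL1, Real.rpow_logb two_pos (by norm_num) hm0R]
        _ = (2:ℝ) ^ (L1 * (((m+1)*t - n : ℕ) : ℝ)) := by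
            rw [← Real.rpow_natCast ((2:ℝ)^L1) _, ← Real.rpow_mul (by norm_num)]
        _ = (2:ℝ) ^ ((((m+1)*t - n : ℕ) : ℝ) * L1) := by rw [mul_comm L1]
    have hrw2 : ((m:ℝ)+1) ^ (n - m*t) = (2:ℝ) ^ (((n - m*t : ℕ) : ℝ) * L2) := by
      calc ((m:ℝ)+1) ^ (n - m*t) = ((2:ℝ) ^ L2) ^ (n - m*t) := by
            rw [hL2, Real.rpow_logb two_pos (by norm_num) (by positivity)]
        _ = (2:ℝ) ^ (L2 * ((n - m*t : ℕ) : ℝ)) := by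
            rw [← Real.rpow_natCast ((2:ℝ)^L2) _, ← Real.rpow_mul (by norm_num)]
        _ = (2:ℝ) ^ (((n - m*t : ℕ) : ℝ) * L2) := by rw [mul_comm L2]
    have hexp : ((((m+1)*t - n : ℕ) : ℝ)) * L1 + (((n - m*t : ℕ) : ℝ)) * L2
        = Efun δ * n + (δ * n - t) * ((m:ℝ) * L2 - ((m:ℝ)+1) * L1) := by
      rw [ha, hb, hEfun]; ring
    have hs0 : 0 ≤ δ * n - (t:ℝ) := by linarith
    have hs1 : δ * n - (t:ℝ) ≤ 1 := by linarith
    have hbound : (δ * n - t) * ((m:ℝ) * L2 - ((m:ℝ)+1) * L1) ≤ D0 := by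
      calc (δ * n - t) * ((m:ℝ) * L2 - ((m:ℝ)+1) * L1)
          ≤ (δ * n - t) * |(m:ℝ) * L2 - ((m:ℝ)+1) * L1| :=
            mul_le_mul_of_nonneg_left (le_abs_self _) hs0
        _ ≤ 1 * |(m:ℝ) * L2 - ((m:ℝ)+1) * L1| :=
            mul_le_mul_of_nonneg_right hs1 (abs_nonneg _)
        _ = D0 := by rw [one_mul, hD0]
    calc (numMIS n t : ℝ)
        = (2:ℝ) ^ (((((m+1)*t - n : ℕ) : ℝ)) * L1 + (((n - m*t : ℕ) : ℝ)) * L2) := by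
          rw [hval, hrw1, hrw2, ← Real.rpow_add two_pos]
      _ ≤ (2:ℝ) ^ (Efun δ * n + D0) := by
          apply Real.rpow_le_rpow_of_exponent_le one_le_two
          rw [hexp]
          linarith
      _ = (2:ℝ) ^ D0 * (2:ℝ) ^ (Efun δ * n) := by
          rw [← Real.rpow_add two_pos]; ring_nf
      _ ≤ C * (2:ℝ) ^ (Efun δ * n) := by
          apply mul_le_mul_of_nonneg_right _ (le_of_lt (hpow_pos _))
          rw [hC]
          have : (0:ℝ) ≤ ∑ k ∈ Finset.range N,
              (numMIS k ⌊δ * k⌋₊ : ℝ) * (2:ℝ) ^ (-(Efun δ * k)) :=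
            Finset.sum_nonneg fun k _ => by positivity
          linarith
end

section
/- Define T : ℕ → ℕ → ℝ by T(1,n) = T(2,n) = 1 and T(k,n) = ∑_{i=0}^{n} C(n,i)·(T(⌊k/2⌋, i) + T(⌈k/2⌉, n−i)) for k ≥ 3. Then T(4,n) ≤ C·n·2^n, T(8,n) ≤ C·n²·3^n, and T(16,n) ≤ C·n³·4^n for some absolute constant C. -/
lemma binom_sum_key (x : ℝ) (n : ℕ) :
    ∑ i ∈ Finset.range (n + 1), (n.choose i : ℝ) * (x ^ i + x ^ (n - i))
      = 2 * (x + 1) ^ n := by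
  have hA : (x + 1) ^ n = ∑ i ∈ Finset.range (n + 1), (n.choose i : ℝ) * x ^ i := by
    rw [add_pow]
    exact Finset.sum_congr rfl fun i _ => by ring
  have hB : (x + 1) ^ n = ∑ i ∈ Finset.range (n + 1), (n.choose i : ℝ) * x ^ (n - i) := by
    have := add_pow (R := ℝ) 1 x n
    rw [show (1:ℝ) + x = x + 1 by ring] at this
    rw [this]
    exact Finset.sum_congr rfl fun i _ => by simp; ring
  calc ∑ i ∈ Finset.range (n + 1), (n.choose i : ℝ) * (x ^ i + x ^ (n - i))
      = ∑ i ∈ Finset.range (n + 1), ((n.choose i : ℝ) * x ^ i + (n.choose i : ℝ) * x ^ (n - i)) :=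
        Finset.sum_congr rfl fun i _ => by ring
    _ = 2 * (x + 1) ^ n := by rw [Finset.sum_add_distrib, ← hA, ← hB]; ring

theorem stmt_15 (T : ℕ → ℕ → ℝ)
    (h1 : ∀ n, T 1 n = 1) (h2 : ∀ n, T 2 n = 1)
    (hrec : ∀ k n, 3 ≤ k →
      T k n = ∑ i ∈ Finset.range (n + 1),
        (n.choose i : ℝ) * (T (k / 2) i + T ((k + 1) / 2) (n - i))) :
    ∃ C : ℝ, 0 < C ∧ ∀ n : ℕ, 1 ≤ n →
      T 4 n ≤ C * n * 2 ^ n ∧ T 8 n ≤ C * n ^ 2 * 3 ^ n ∧ T 16 n ≤ C * n ^ 3 * 4 ^ n := by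
  have t4 : ∀ n, T 4 n = 2 * 2 ^ n := by
    intro n
    rw [hrec 4 n (by norm_num)]
    have := binom_sum_key 1 n
    simp only [one_pow] at this ⊢
    norm_num at this ⊢
    calc ∑ i ∈ Finset.range (n + 1), (n.choose i : ℝ) * (T 2 i + T 2 (n - i))
        = ∑ i ∈ Finset.range (n + 1), (n.choose i : ℝ) * ((1:ℝ) + 1) := by
          exact Finset.sum_congr rfl fun i _ => by rw [h2, h2]
      _ = 2 * 2 ^ n := by rw [← this]; exact Finset.sum_congr rfl fun i _ => by norm_num
  have t8 : ∀ n, T 8 n = 4 * 3 ^ n := by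
    intro n
    rw [hrec 8 n (by norm_num)]
    have := binom_sum_key 2 n
    norm_num at this
    calc ∑ i ∈ Finset.range (n + 1), (n.choose i : ℝ) * (T 4 i + T 4 (n - i))
        = 2 * ∑ i ∈ Finset.range (n + 1), (n.choose i : ℝ) * ((2:ℝ) ^ i + 2 ^ (n - i)) := by
          rw [Finset.mul_sum]
          exact Finset.sum_congr rfl fun i _ => by rw [t4, t4]; ring
      _ = 4 * 3 ^ n := by rw [this]; ring
  have t16 : ∀ n, T 16 n = 8 * 4 ^ n := by
    intro n
    rw [hrec 16 n (by norm_num)]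
    have := binom_sum_key 3 n
    norm_num at this
    calc ∑ i ∈ Finset.range (n + 1), (n.choose i : ℝ) * (T 8 i + T 8 (n - i))
        = 4 * ∑ i ∈ Finset.range (n + 1), (n.choose i : ℝ) * ((3:ℝ) ^ i + 3 ^ (n - i)) := by
          rw [Finset.mul_sum]
          exact Finset.sum_congr rfl fun i _ => by rw [t8, t8]; ring
      _ = 8 * 4 ^ n := by rw [this]; ring
  refine ⟨8, by norm_num, fun n hn => ?_⟩
  have hn' : (1 : ℝ) ≤ n := by exact_mod_cast hn
  refine ⟨?_, ?_, ?_⟩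
  · rw [t4]
    have h2p := pow_pos (show (0:ℝ) < 2 by norm_num) n
    nlinarith
  · rw [t8]
    have h3 := pow_pos (show (0:ℝ) < 3 by norm_num) n
    have : (1:ℝ) ≤ (n:ℝ) ^ 2 := one_le_pow₀ hn'
    nlinarith
  · rw [t16]
    have h4 := pow_pos (show (0:ℝ) < 4 by norm_num) n
    have : (1:ℝ) ≤ (n:ℝ) ^ 3 := one_le_pow₀ hn'
    nlinarith
end

section
/- If a graph G on n vertices is k-colorable with k ≥ 2 and χ(G) ≥ 3, then there exist a maximal independent set I of G and a set T ⊆ V∖I with |T| ≤ ⌊n/2⌋ and |V∖I∖T| ≤ ⌊n/2⌋ such that χ(G) = 1 + χ(G[T]) + χ(G[V∖I∖T]). -/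
/-- Any independent set extends to a maximal independent set (finite case). -/
lemma exists_isMaxIndepSet_superset {V : Type*} [Finite V] (G : SimpleGraph V) {s : Set V}
    (hs : G.IsIndepSet' s) : ∃ I, s ⊆ I ∧ G.IsMaxIndepSet I := by
  obtain ⟨I, hle, hmax⟩ := Finite.exists_le_maximal (p := G.IsIndepSet') hs
  exact ⟨I, hle, hmax.1, fun t ht hst => hst.antisymm (hmax.2 ht hst)⟩

open Finset in
theorem stmt_19 {V : Type*} [Fintype V] (G : SimpleGraph V) (n : ℕ)
    (hn : n = Fintype.card V) (k : ℕ) (hk : 2 ≤ k) (hcol : G.Colorable k)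
    (hchi : 3 ≤ G.chromaticNumber) :
    ∃ (I T : Set V), G.IsMaxIndepSet I ∧ T ⊆ Iᶜ ∧
      T.ncard ≤ n / 2 ∧ (Iᶜ \ T).ncard ≤ n / 2 ∧
      G.chromaticNumber =
        1 + (G.induce T).chromaticNumber + (G.induce (Iᶜ \ T)).chromaticNumber := by
  classical
  have hne : G.chromaticNumber ≠ ⊤ :=
    (hcol.chromaticNumber_le.trans_lt (WithTop.coe_lt_top k)).ne
  lift G.chromaticNumber to ℕ using hne with c hc
  have hc3 : 3 ≤ c := by exact_mod_cast hchi
  have hccol : G.Colorable c := SimpleGraph.chromaticNumber_le_iff_colorable.mp hc.ge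
  obtain ⟨f⟩ := hccol
  have : Nonempty (Fin c) := ⟨⟨0, by omega⟩⟩
  -- pick a largest color class
  obtain ⟨i0, -, hi0⟩ := Finset.exists_max_image (univ : Finset (Fin c))
    (fun i => (f ⁻¹' {i} : Set V).ncard) univ_nonempty
  have hC0 : G.IsIndepSet' (f ⁻¹' {i0}) := by
    intro v hv w hw hadj
    simp only [Set.mem_preimage, Set.mem_singleton_iff] at hv hw
    exact f.valid hadj (hv.trans hw.symm)
  obtain ⟨I, hC0I, hI⟩ := exists_isMaxIndepSet_superset G hC0
  have hfvI : ∀ v, v ∉ I → f v ≠ i0 := by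
    intro v hv hfv
    exact hv (hC0I (by simpa using hfv))
  set A : Finset (Fin c) := (univ : Finset (Fin c)).erase i0 with hA
  set g : Finset (Fin c) → ℕ := fun S => ((f ⁻¹' ↑S) \ I).ncard with hg
  have hp0 : ((∅ : Finset (Fin c)) ⊆ A ∧ g ∅ ≤ n / 2) := by
    constructor
    · exact empty_subset A
    · simp [hg]
  obtain ⟨S, -, hSmax⟩ :=
    Finite.exists_le_maximal (p := fun S : Finset (Fin c) => S ⊆ A ∧ g S ≤ n / 2) hp0
  have hSA : S ⊆ A := hSmax.1.1
  set T : Set V := (f ⁻¹' ↑S) \ I with hT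
  have hTsub : T ⊆ Iᶜ := fun v hv => hv.2
  have hRT : Iᶜ \ T = (f ⁻¹' ↑(A \ S)) \ I := by
    ext v
    simp only [Set.mem_diff, Set.mem_compl_iff, hT, Set.mem_preimage, Finset.coe_sdiff,
      Set.mem_diff, Finset.mem_coe, Finset.mem_sdiff, hA, Finset.mem_erase, Finset.mem_univ,
      and_true]
    constructor
    · rintro ⟨hvI, hvT⟩
      have := hfvI v hvI
      exact ⟨⟨this, fun h => hvT ⟨h, hvI⟩⟩, hvI⟩
    · rintro ⟨⟨-, hfS⟩, hvI⟩
      exact ⟨hvI, fun h => hfS h.1⟩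
  have hTcard : T.ncard ≤ n / 2 := hSmax.1.2
  -- cardinality of the rest
  have hRcard : (Iᶜ \ T).ncard ≤ n / 2 := by
    rw [hRT]
    by_contra hgt
    push_neg at hgt
    have hASne : (A \ S).Nonempty := by
      rcases (A \ S).eq_empty_or_nonempty with h | h
      · rw [h] at hgt; simp [hg] at hgt
      · exact h
    obtain ⟨i, hiAS⟩ := hASne
    have hiA : i ∈ A := (Finset.mem_sdiff.mp hiAS).1
    have hiS : i ∉ S := (Finset.mem_sdiff.mp hiAS).2
    have hins : ¬ (g (insert i S) ≤ n / 2) := by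
      intro h
      have hle := hSmax.2 ⟨Finset.insert_subset hiA hSA, h⟩ (Finset.subset_insert i S)
      exact hiS (hle (Finset.mem_insert_self i S))
    have key1 : g (insert i S) ≤ g S + ((f ⁻¹' {i}) \ I).ncard := by
      have hsub2 : (f ⁻¹' ↑(insert i S)) \ I ⊆ ((f ⁻¹' ↑S) \ I) ∪ ((f ⁻¹' {i}) \ I) := by
        intro v hv
        simp only [Finset.coe_insert, Set.mem_diff, Set.mem_preimage, Set.mem_insert_iff,
          Finset.mem_coe, Set.mem_union, Set.mem_singleton_iff] at hv ⊢
        tauto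
      exact le_trans (Set.ncard_le_ncard hsub2 (Set.toFinite _)) (Set.ncard_union_le _ _)
    have key3 : (Iᶜ : Set V).ncard = g S + g (A \ S) := by
      have hu : (Iᶜ : Set V) = T ∪ (Iᶜ \ T) := (Set.union_diff_cancel hTsub).symm
      rw [hu, Set.ncard_union_eq Set.disjoint_sdiff_right (Set.toFinite _) (Set.toFinite _), hRT]
    have key4 : ((f ⁻¹' {i}) \ I).ncard ≤ I.ncard := by
      refine le_trans (Set.ncard_le_ncard Set.diff_subset (Set.toFinite _)) ?_
      exact le_trans (hi0 i (mem_univ i)) (Set.ncard_le_ncard hC0I (Set.toFinite _))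
    have key5 : I.ncard + (Iᶜ : Set V).ncard = n := by
      rw [Set.ncard_add_ncard_compl, hn, Nat.card_eq_fintype_card]
    have e1 : g S = T.ncard := rfl
    have e2 : g (A \ S) = ((f ⁻¹' ↑(A \ S)) \ I).ncard := rfl
    have hgS : g S ≤ n / 2 := hSmax.1.2
    omega
  refine ⟨I, T, hI, hTsub, hTcard, hRcard, ?_⟩
  -- colorability of the two parts
  have CT0 : (G.induce T).Coloring {x // x ∈ S} :=
    SimpleGraph.Coloring.mk (fun v => ⟨f v.1, by exact_mod_cast v.2.1⟩)
      (by
        intro a b hab hEq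
        exact f.valid hab (by simpa [Subtype.ext_iff] using hEq))
  have colT : (G.induce T).Colorable S.card := by
    simpa only [Fintype.card_coe] using CT0.colorable
  have CR0 : (G.induce (Iᶜ \ T)).Coloring {x // x ∈ A \ S} :=
    SimpleGraph.Coloring.mk
      (fun v => ⟨f v.1, by
        have h2 : (↑v : V) ∈ (f ⁻¹' ↑(A \ S)) \ I := by rw [← hRT]; exact v.2
        exact_mod_cast h2.1⟩)
      (by
        intro a b hab hEq
        exact f.valid hab (by simpa [Subtype.ext_iff] using hEq))
  have colR : (G.induce (Iᶜ \ T)).Colorable (A \ S).card := by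
    simpa only [Fintype.card_coe] using CR0.colorable
  have hTne : (G.induce T).chromaticNumber ≠ ⊤ :=
    (colT.chromaticNumber_le.trans_lt (WithTop.coe_lt_top _)).ne
  have hRne : (G.induce (Iᶜ \ T)).chromaticNumber ≠ ⊤ :=
    (colR.chromaticNumber_le.trans_lt (WithTop.coe_lt_top _)).ne
  lift (G.induce T).chromaticNumber to ℕ using hTne with a ha
  lift (G.induce (Iᶜ \ T)).chromaticNumber to ℕ using hRne with b hb
  have haS : a ≤ S.card := by
    have := colT.chromaticNumber_le
    rw [← ha] at this
    exact_mod_cast this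
  have hbS : b ≤ (A \ S).card := by
    have := colR.chromaticNumber_le
    rw [← hb] at this
    exact_mod_cast this
  obtain ⟨CT⟩ := SimpleGraph.chromaticNumber_le_iff_colorable.mp ha.ge
  obtain ⟨CR⟩ := SimpleGraph.chromaticNumber_le_iff_colorable.mp hb.ge
  -- combined coloring of G
  have F : G.Coloring (Option (Fin a ⊕ Fin b)) := by
    refine SimpleGraph.Coloring.mk
      (fun v => if hv : v ∈ I then none else if hvT : v ∈ T then some (Sum.inl (CT ⟨v, hvT⟩))
        else some (Sum.inr (CR ⟨v, ⟨hv, hvT⟩⟩))) ?_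
    intro v w hadj heq
    beta_reduce at heq
    by_cases hvI : v ∈ I <;> by_cases hwI : w ∈ I
    · exact hI.1 v hvI w hwI hadj
    · rw [dif_pos hvI, dif_neg hwI] at heq
      split_ifs at heq <;> exact Option.noConfusion heq
    · rw [dif_neg hvI, dif_pos hwI] at heq
      split_ifs at heq <;> exact Option.noConfusion heq
    · rw [dif_neg hvI, dif_neg hwI] at heq
      by_cases hvT : v ∈ T <;> by_cases hwT : w ∈ T
      · rw [dif_pos hvT, dif_pos hwT] at heq
        exact CT.valid (show (G.induce T).Adj ⟨v, hvT⟩ ⟨w, hwT⟩ from hadj) (by simpa using heq)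
      · rw [dif_pos hvT, dif_neg hwT] at heq
        simp at heq
      · rw [dif_neg hvT, dif_pos hwT] at heq
        simp at heq
      · rw [dif_neg hvT, dif_neg hwT] at heq
        exact CR.valid
          (show (G.induce (Iᶜ \ T)).Adj ⟨v, ⟨hvI, hvT⟩⟩ ⟨w, ⟨hwI, hwT⟩⟩ from hadj)
          (by simpa using heq)
  have hGcol : G.Colorable (a + b + 1) := by
    have := F.colorable
    simpa using this
  have hcle2 : c ≤ a + b + 1 := by
    have := hGcol.chromaticNumber_le
    rw [← hc] at this
    exact_mod_cast this
  have hAcard : A.card = c - 1 := by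
    have h1 : A.card = (univ : Finset (Fin c)).card - 1 := Finset.card_erase_of_mem (mem_univ i0)
    simpa using h1
  have hcardsum : S.card + (A \ S).card = c - 1 := by
    rw [Finset.card_sdiff_of_subset hSA, hAcard]
    have := Finset.card_le_card hSA
    omega
  have hceq : c = 1 + a + b := by omega
  exact_mod_cast congrArg (Nat.cast : ℕ → ℕ∞) hceq
end
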